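/- arXiv:2306.14386 — 5 statements merged into one kernel-verified Lean document; each statement's English description precedes it below -/
import Mathlib

section
/- Kaloujnine–Krasner Universal Embedding Theorem: Let G and Q be groups, let ε : G → Q be a surjective group homomorphism, let N := ker ε, and let s : Q → G be any function with ε ∘ s = id_Q. For g ∈ G define σ_g : Q → N by σ_g(q) := s(q)⁻¹ · g · s(ε(g)⁻¹ q). Then σ_g(q) indeed lies in N = ker ε for every q ∈ Q, and the map φ : G → N ≀_r Q = (Q → N) ⋊_θ Q given by φ(g) = (σ_g, ε(g)) is an injective group homomorphism. In particular, every extension of N by Q embeds into the regular wreath product N ≀_r Q. -/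
/-!
The section `s` turns each `g ∈ G` into the function `σ_g(q) = s(q)⁻¹ g s(ε(g)⁻¹ q)` with values
in `ker ε`, and these functions satisfy the cocycle identity `σ_{g₁g₂}(q) = σ_{g₁}(q) σ_{g₂}(ε(g₁)⁻¹ q)`,
which is precisely the multiplication rule of `(Q → ker ε) ⋊ Q`. The map is injective because
`g = s(1) σ_g(1) s(ε(g)⁻¹)⁻¹` is recovered from `σ_g` and `ε g`.
-/

/-- The homomorphism `θ : H → Aut(Ω → K)` given by `(θ_h f)(ω) = f (h⁻¹ • ω)`. -/
def wreathTheta (K : Type*) {H Ω : Type*} [Group K] [Group H] [MulAction H Ω] :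
    H →* MulAut (Ω → K) where
  toFun h :=
    { toFun := fun f ω => f (h⁻¹ • ω)
      invFun := fun f ω => f (h • ω)
      left_inv := fun f => funext fun ω => by simp
      right_inv := fun f => funext fun ω => by simp
      map_mul' := fun f g => rfl }
  map_one' := by ext f ω; simp
  map_mul' := fun h₁ h₂ => by ext f ω; simp [mul_smul]

/-- The wreath product `K ≀_Ω H := (Ω → K) ⋊_θ H`. -/
abbrev WreathProduct (K Ω H : Type*) [Group K] [Group H] [MulAction H Ω] : Type _ :=
  SemidirectProduct (Ω → K) H (wreathTheta K)

/-- The regular wreath product `K ≀_r H := K ≀_H H`, with `H` acting on itself by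
left multiplication. -/
abbrev RegularWreathProduct' (K H : Type*) [Group K] [Group H] : Type _ :=
  WreathProduct K H H

namespace KaloujnineKrasner

variable {G Q : Type*} [Group G] [Group Q] (ε : G →* Q) (s : Q → G)

def sectionCocycle (g : G) (q : Q) : G :=
  (s q)⁻¹ * g * s ((ε g)⁻¹ * q)

theorem sectionCocycle_mem_ker (hs : ∀ q, ε (s q) = q) (g : G) (q : Q) :
    sectionCocycle ε s g q ∈ ε.ker := by
  simp [sectionCocycle, MonoidHom.mem_ker, hs, mul_assoc]

theorem sectionCocycle_one (q : Q) : sectionCocycle ε s 1 q = 1 := by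
  simp [sectionCocycle]

theorem sectionCocycle_mul (g₁ g₂ : G) (q : Q) :
    sectionCocycle ε s (g₁ * g₂) q =
      sectionCocycle ε s g₁ q * sectionCocycle ε s g₂ ((ε g₁)⁻¹ * q) := by
  simp only [sectionCocycle, map_mul, mul_inv_rev, mul_assoc]
  group

theorem eq_of_sectionCocycle_eq {g₁ g₂ : G} (q : Q) (hε : ε g₁ = ε g₂)
    (hσ : sectionCocycle ε s g₁ q = sectionCocycle ε s g₂ q) : g₁ = g₂ := by
  rw [sectionCocycle, sectionCocycle, hε] at hσ
  exact mul_left_cancel (mul_right_cancel hσ)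

def embedding (hs : ∀ q, ε (s q) = q) : G →* RegularWreathProduct' ε.ker Q where
  toFun g := ⟨fun q => ⟨sectionCocycle ε s g q, sectionCocycle_mem_ker ε s hs g q⟩, ε g⟩
  map_one' := by
    ext q
    · exact sectionCocycle_one ε s q
    · exact map_one ε
  map_mul' g₁ g₂ := by
    ext q
    · exact sectionCocycle_mul ε s g₁ g₂ q
    · exact map_mul ε g₁ g₂

theorem embedding_injective (hs : ∀ q, ε (s q) = q) : Function.Injective (embedding ε s hs) :=
  fun _ _ h => eq_of_sectionCocycle_eq ε s 1 (congrArg SemidirectProduct.right h)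
    (congrArg (fun x => ((x.left 1 : ε.ker) : G)) h)

end KaloujnineKrasner

open KaloujnineKrasner in
theorem kaloujnine_krasner_general {G Q : Type*} [Group G] [Group Q]
    (ε : G →* Q)
    (s : Q → G) (hs : ∀ q : Q, ε (s q) = q) :
    (∀ (g : G) (q : Q), (s q)⁻¹ * g * s ((ε g)⁻¹ * q) ∈ ε.ker) ∧
    ∃ φ : G →* RegularWreathProduct' ε.ker Q,
      Function.Injective φ ∧
      ∀ g : G, (φ g).right = ε g ∧
        ∀ q : Q, (((φ g).left q : G) = (s q)⁻¹ * g * s ((ε g)⁻¹ * q)) :=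
  ⟨sectionCocycle_mem_ker ε s hs, embedding ε s hs, embedding_injective ε s hs,
    fun _ => ⟨rfl, fun _ => rfl⟩⟩

/-- **Kaloujnine–Krasner universal embedding theorem.**
Let `ε : G → Q` be a surjective group homomorphism with kernel `N := ker ε`, and let
`s : Q → G` satisfy `ε ∘ s = id`.  For `g ∈ G` and `q ∈ Q` the element
`σ_g(q) := s(q)⁻¹ * g * s(ε(g)⁻¹ * q)` lies in `N`, and the map
`φ : G → N ≀_r Q`, `φ(g) = (σ_g, ε(g))`, is an injective group homomorphism. -/
theorem kaloujnine_krasner {G Q : Type*} [Group G] [Group Q]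
    (ε : G →* Q) (hεsurj : Function.Surjective ε)
    (s : Q → G) (hs : ∀ q : Q, ε (s q) = q) :
    (∀ (g : G) (q : Q), (s q)⁻¹ * g * s ((ε g)⁻¹ * q) ∈ ε.ker) ∧
    ∃ φ : G →* RegularWreathProduct' ε.ker Q,
      Function.Injective φ ∧
      ∀ g : G, (φ g).right = ε g ∧
        ∀ q : Q, (((φ g).left q : G) = (s q)⁻¹ * g * s ((ε g)⁻¹ * q)) :=
  kaloujnine_krasner_general ε s hs
end

section
/- Let F be a field with a fixed algebraic closure F̄, and let K ⊆ L be intermediate fields of F̄/F with L/F finite and separable. Let K^c and L^c denote the Galois closures (normal closures inside F̄) of K/F and L/F respectively, so K^c ⊆ L^c, both K^c/F and L^c/F are finite Galois, and Gal(L^c/K^c) is the subgroup of Gal(L^c/F) of automorphisms fixing K^c pointwise. Let ε : Gal(L^c/F) → Gal(K^c/F) be the (surjective) restriction homomorphism and let s : Gal(K^c/F) → Gal(L^c/F) be any function with ε ∘ s = id. For ρ ∈ Gal(L^c/F) define σ_ρ : Gal(K^c/F) → Gal(L^c/K^c) by σ_ρ(τ) := s(τ)⁻¹ ∘ ρ ∘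 s(ε(ρ)⁻¹ ∘ τ). Then σ_ρ(τ) indeed fixes K^c pointwise for every τ, and the map φ : Gal(L^c/F) → Gal(L^c/K^c) ≀_r Gal(K^c/F), φ(ρ) = (σ_ρ, ε(ρ)), is an injective group homomorphism. -/
/-- The Galois closure (normal closure inside `Fbar`) of an intermediate field `M` of
`Fbar/F`. -/
noncomputable def galoisClosure (F : Type*) {Fbar : Type*} [Field F] [Field Fbar]
    [Algebra F Fbar] (M : IntermediateField F Fbar) : IntermediateField F Fbar :=
  IntermediateField.normalClosure F ↥M Fbar

namespace MonoidHom

variable {G Q : Type*} [Group G] [Group Q] (ε : G →* Q) (s : Q → G)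

def wreathComponent (ρ : G) (τ : Q) : G :=
  (s τ)⁻¹ * ρ * s ((ε ρ)⁻¹ * τ)

theorem wreathComponent_mul (ρ₁ ρ₂ : G) (τ : Q) :
    ε.wreathComponent s (ρ₁ * ρ₂) τ =
      ε.wreathComponent s ρ₁ τ * ε.wreathComponent s ρ₂ ((ε ρ₁)⁻¹ * τ) := by
  simp only [wreathComponent, map_mul, mul_inv_rev, mul_assoc, mul_inv_cancel_left]

variable {s} in
theorem wreathComponent_mem_ker (hs : ∀ τ, ε (s τ) = τ) (ρ : G) (τ : Q) :
    ε.wreathComponent s ρ τ ∈ ε.ker := by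
  simp [mem_ker, wreathComponent, hs]

def toRegularWreath (N : Subgroup G) (hN : ∀ ρ τ, ε.wreathComponent s ρ τ ∈ N) :
    G →* RegularWreathProduct' N Q where
  toFun ρ := ⟨fun τ => ⟨ε.wreathComponent s ρ τ, hN ρ τ⟩, ε ρ⟩
  map_one' := by
    refine SemidirectProduct.ext (funext fun τ => Subtype.ext ?_) (map_one ε)
    simp [wreathComponent]
  map_mul' ρ₁ ρ₂ := by
    refine SemidirectProduct.ext (funext fun τ => Subtype.ext ?_) (map_mul ε ρ₁ ρ₂)
    exact ε.wreathComponent_mul s ρ₁ ρ₂ τ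

theorem toRegularWreath_injective (N : Subgroup G)
    (hN : ∀ ρ τ, ε.wreathComponent s ρ τ ∈ N) :
    Function.Injective (ε.toRegularWreath s N hN) := by
  intro ρ₁ ρ₂ h
  have hε : ε ρ₁ = ε ρ₂ := congrArg SemidirectProduct.right h
  have h₁ : ε.wreathComponent s ρ₁ 1 = ε.wreathComponent s ρ₂ 1 :=
    congrArg Subtype.val (congrFun (congrArg SemidirectProduct.left h) 1)
  rw [wreathComponent, wreathComponent, hε] at h₁
  exact mul_left_cancel (mul_right_cancel h₁)

end MonoidHom

theorem IntermediateField.apply_eq_self_of_restrict_eq_one {F Fbar : Type*} [Field F]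
    [Field Fbar] [Algebra F Fbar] {A B : IntermediateField F Fbar} (hAB : A ≤ B)
    {ε : (B ≃ₐ[F] B) → (A ≃ₐ[F] A)}
    (hε : ∀ g (x : A), ((ε g x : A) : Fbar) = (g (IntermediateField.inclusion hAB x) : Fbar))
    {g : B ≃ₐ[F] B} (hg : ε g = 1) (x : B) (hx : (x : Fbar) ∈ A) : g x = x := by
  have := hε g ⟨x, hx⟩
  rw [hg] at this
  exact Subtype.ext this.symm

theorem galois_embeds_regular_wreath_general
    {F Fbar : Type*} [Field F] [Field Fbar] [Algebra F Fbar]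
    (K L : IntermediateField F Fbar)
    (hle : galoisClosure F K ≤ galoisClosure F L)
    (GalLcKc : Subgroup (↥(galoisClosure F L) ≃ₐ[F] ↥(galoisClosure F L)))
    (hGalLcKc : ∀ ρ, ρ ∈ GalLcKc ↔
      ∀ x : ↥(galoisClosure F L), (x : Fbar) ∈ galoisClosure F K → ρ x = x)
    (ε : (↥(galoisClosure F L) ≃ₐ[F] ↥(galoisClosure F L)) →*
      (↥(galoisClosure F K) ≃ₐ[F] ↥(galoisClosure F K)))
    (hε : ∀ ρ (x : ↥(galoisClosure F K)),
      ((ε ρ x : ↥(galoisClosure F K)) : Fbar) = (ρ (IntermediateField.inclusion hle x) : Fbar))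
    (s : (↥(galoisClosure F K) ≃ₐ[F] ↥(galoisClosure F K)) →
      (↥(galoisClosure F L) ≃ₐ[F] ↥(galoisClosure F L)))
    (hs : ∀ τ, ε (s τ) = τ) :
    (∀ ρ τ, (s τ)⁻¹ * ρ * s ((ε ρ)⁻¹ * τ) ∈ GalLcKc) ∧
    ∃ φ : (↥(galoisClosure F L) ≃ₐ[F] ↥(galoisClosure F L)) →*
        RegularWreathProduct' ↥GalLcKc (↥(galoisClosure F K) ≃ₐ[F] ↥(galoisClosure F K)),
      Function.Injective φ ∧
      ∀ ρ, (φ ρ).right = ε ρ ∧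
        ∀ τ, (((φ ρ).left τ : ↥(galoisClosure F L) ≃ₐ[F] ↥(galoisClosure F L)) =
          (s τ)⁻¹ * ρ * s ((ε ρ)⁻¹ * τ)) := by
  have hmem : ∀ ρ τ, ε.wreathComponent s ρ τ ∈ GalLcKc := fun ρ τ =>
    (hGalLcKc _).2 <| IntermediateField.apply_eq_self_of_restrict_eq_one hle hε <|
      ε.wreathComponent_mem_ker hs ρ τ
  exact ⟨hmem, ε.toRegularWreath s GalLcKc hmem, ε.toRegularWreath_injective s GalLcKc hmem,
    fun ρ => ⟨rfl, fun τ => rfl⟩⟩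

/-- For a tower `F ⊆ K ⊆ L` inside an algebraic closure `Fbar` of `F`, with
`L/F` finite and separable, let `K^c ⊆ L^c` be the Galois closures of `K/F` and `L/F`, let
`GalLcKc = Gal(L^c/K^c)` be the subgroup of `Gal(L^c/F)` fixing `K^c` pointwise, let
`ε : Gal(L^c/F) → Gal(K^c/F)` be the (surjective) restriction homomorphism, and let
`s` be a set-theoretic section of `ε`.  Then for all `ρ, τ` the automorphism
`σ_ρ(τ) := s(τ)⁻¹ ∘ ρ ∘ s(ε(ρ)⁻¹ ∘ τ)` fixes `K^c` pointwise, and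
`φ : ρ ↦ (σ_ρ, ε(ρ))` is an injective group homomorphism
`Gal(L^c/F) → Gal(L^c/K^c) ≀_r Gal(K^c/F)`. -/
theorem galois_embeds_regular_wreath
    {F Fbar : Type*} [Field F] [Field Fbar] [Algebra F Fbar] [IsAlgClosure F Fbar]
    (K L : IntermediateField F Fbar) (hKL : K ≤ L)
    [FiniteDimensional F ↥L] [Algebra.IsSeparable F ↥L]
    (hle : galoisClosure F K ≤ galoisClosure F L)
    (GalLcKc : Subgroup (↥(galoisClosure F L) ≃ₐ[F] ↥(galoisClosure F L)))
    (hGalLcKc : ∀ ρ, ρ ∈ GalLcKc ↔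
      ∀ x : ↥(galoisClosure F L), (x : Fbar) ∈ galoisClosure F K → ρ x = x)
    (ε : (↥(galoisClosure F L) ≃ₐ[F] ↥(galoisClosure F L)) →*
      (↥(galoisClosure F K) ≃ₐ[F] ↥(galoisClosure F K)))
    (hεsurj : Function.Surjective ε)
    (hε : ∀ ρ (x : ↥(galoisClosure F K)),
      ((ε ρ x : ↥(galoisClosure F K)) : Fbar) = (ρ (IntermediateField.inclusion hle x) : Fbar))
    (s : (↥(galoisClosure F K) ≃ₐ[F] ↥(galoisClosure F K)) →
      (↥(galoisClosure F L) ≃ₐ[F] ↥(galoisClosure F L)))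
    (hs : ∀ τ, ε (s τ) = τ) :
    (∀ ρ τ, (s τ)⁻¹ * ρ * s ((ε ρ)⁻¹ * τ) ∈ GalLcKc) ∧
    ∃ φ : (↥(galoisClosure F L) ≃ₐ[F] ↥(galoisClosure F L)) →*
        RegularWreathProduct' ↥GalLcKc (↥(galoisClosure F K) ≃ₐ[F] ↥(galoisClosure F K)),
      Function.Injective φ ∧
      ∀ ρ, (φ ρ).right = ε ρ ∧
        ∀ τ, (((φ ρ).left τ : ↥(galoisClosure F L) ≃ₐ[F] ↥(galoisClosure F L)) =
          (s τ)⁻¹ * ρ * s ((ε ρ)⁻¹ * τ)) :=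
  galois_embeds_regular_wreath_general K L hle GalLcKc hGalLcKc ε hε s hs
end

section
/- (Chai–Oort) Let K be a number field of degree n = [K : ℚ] and let L be a quadratic extension of K (inside a fixed algebraic closure of ℚ). Let L^c denote the Galois closure of L/ℚ. Then the Galois group Gal(L^c/ℚ) is isomorphic to a subgroup of the wreath product C₂ ≀_Ω S_n, where Ω = {1, 2, ..., n}, C₂ = ℤ/2ℤ, and the symmetric group S_n acts on Ω (equivalently, on C₂^Ω) by permuting components. That is, there is an injective group homomorphism Gal(L^c/ℚ) → (Ω → ℤ/2ℤ) ⋊_θ S_n, where (θ_π f)(i) = f(π⁻¹(i)). -/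
/-!
The Galois group `G` of `L^c/ℚ` acts on the `2n` embeddings `L → L^c`, faithfully because `L^c`
is generated by their images. Restriction to `K` maps them `G`-equivariantly onto the `n`
embeddings `K → L^c`, and each fibre consists of the `[L : K] = 2` extensions of an embedding of
`K`. Identifying every fibre with `C₂`, `G` becomes a group of permutations of `Ω × C₂` that
permute the fibres; such a permutation is the action of an element of `C₂ ≀_Ω S_Ω`, because an
injective self-map of `C₂` is a translation.
-/

open Module IntermediateField

local notation "C₂" => Multiplicative (ZMod 2)

section WreathAction

variable {K Ω H : Type*} [Group K] [Group H] [MulAction H Ω]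

instance : SMul (WreathProduct K Ω H) (Ω × K) where
  smul w z := (w.right • z.1, w.left (w.right • z.1) * z.2)

theorem WreathProduct.smul_def (w : WreathProduct K Ω H) (z : Ω × K) :
    w • z = (w.right • z.1, w.left (w.right • z.1) * z.2) := rfl

instance : MulAction (WreathProduct K Ω H) (Ω × K) where
  one_smul z := by simp [WreathProduct.smul_def]
  mul_smul w₁ w₂ z := by simp [WreathProduct.smul_def, mul_smul, wreathTheta, mul_assoc]

instance [FaithfulSMul H Ω] : FaithfulSMul (WreathProduct K Ω H) (Ω × K) where
  eq_of_smul_eq_smul {w₁ w₂} h := by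
    simp only [WreathProduct.smul_def, Prod.forall, Prod.mk.injEq, mul_left_inj] at h
    have hright : w₁.right = w₂.right := eq_of_smul_eq_smul fun ω => (h ω 1).1
    refine SemidirectProduct.ext (funext fun ω => ?_) hright
    simpa [hright] using (h (w₂.right⁻¹ • ω) 1).2

theorem apply_eq_apply_one_mul_of_injective_zmodTwo {f : C₂ → C₂} (hf : Function.Injective f)
    (k : C₂) : f k = f 1 * k := by
  revert f k; decide

theorem WreathProduct.exists_smul_eq_of_fst_eq (σ : Equiv.Perm (Ω × C₂)) (π : Equiv.Perm Ω)
    (hσ : ∀ z, (σ z).1 = π z.1) : ∃ w : WreathProduct C₂ Ω (Equiv.Perm Ω), ∀ z, w • z = σ z := by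
  refine ⟨⟨fun ω => (σ (π⁻¹ ω, 1)).2, π⟩, fun ⟨ω, k⟩ => ?_⟩
  have hfiber : Function.Injective fun k => (σ (ω, k)).2 := fun k₁ k₂ h =>
    congrArg Prod.snd (σ.injective (Prod.ext ((hσ (ω, k₁)).trans (hσ (ω, k₂)).symm) h))
  ext
  · exact (hσ _).symm
  · simp [WreathProduct.smul_def, apply_eq_apply_one_mul_of_injective_zmodTwo hfiber k]

theorem exists_injective_hom_wreathProduct_of_card_fiber_eq_two {G X Y : Type*} [Group G]
    [MulAction G X] [FaithfulSMul G X] [MulAction G Y] (p : X → Y)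
    (hp : ∀ (g : G) (x : X), p (g • x) = g • p x) (e : Y ≃ Ω)
    (hfiber : ∀ y, Nat.card {x // p x = y} = 2) :
    ∃ φ : G →* WreathProduct C₂ Ω (Equiv.Perm Ω), Function.Injective φ := by
  have fiberEquiv (y : Y) : {x // p x = y} ≃ C₂ :=
    have := Nat.finite_of_card_ne_zero ((hfiber y).trans_ne two_ne_zero)
    (Finite.equivFin _).trans ((finCongr (hfiber y)).trans (Multiplicative.ofAdd (α := ZMod 2)))
  let E : X ≃ Ω × C₂ := (Equiv.sigmaFiberEquiv p).symm.trans <|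
    (Equiv.sigmaCongrRight fiberEquiv).trans <|
      (Equiv.sigmaEquivProd Y C₂).trans (Equiv.prodCongr e (Equiv.refl _))
  have hE (x : X) : (E x).1 = e (p x) := rfl
  let ρ : G →* Equiv.Perm (Ω × C₂) :=
    (Equiv.permCongrHom E).toMonoidHom.comp (MulAction.toPermHom G X)
  let π : G →* Equiv.Perm Ω := (Equiv.permCongrHom e).toMonoidHom.comp (MulAction.toPermHom G Y)
  have hρ : Function.Injective ρ :=
    (Equiv.permCongrHom E).injective.comp MulAction.toPerm_injective
  have hρπ (g : G) (z : Ω × C₂) : (ρ g z).1 = π g z.1 := by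
    have hz : e.symm z.1 = p (E.symm z) := by
      rw [Equiv.symm_apply_eq, ← hE, Equiv.apply_symm_apply]
    simp [ρ, π, Equiv.permCongrHom, Equiv.permCongr_apply, hE, hp, hz]
  let ι := MulAction.toPermHom (WreathProduct C₂ Ω (Equiv.Perm Ω)) (Ω × C₂)
  have hι : Function.Injective ι := MulAction.toPerm_injective
  have hrange (g : G) : ρ g ∈ ι.range :=
    let ⟨w, hw⟩ := WreathProduct.exists_smul_eq_of_fst_eq (ρ g) (π g) (hρπ g)
    ⟨w, Equiv.ext hw⟩
  refine ⟨(MonoidHom.ofInjective hι).symm.toMonoidHom.comp (ρ.codRestrict ι.range hrange),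
    fun g₁ g₂ h => hρ ?_⟩
  exact congrArg Subtype.val ((MonoidHom.ofInjective hι).symm.injective h)

end WreathAction

section Galois

instance {R A B : Type*} [CommSemiring R] [Semiring A] [Semiring B] [Algebra R A] [Algebra R B] :
    MulAction (B ≃ₐ[R] B) (A →ₐ[R] B) where
  smul g σ := (g : B →ₐ[R] B).comp σ
  one_smul _ := rfl
  mul_smul _ _ _ := rfl

variable {F K L E : Type*} [Field F] [Field K] [Field L] [Field E] [Algebra F K] [Algebra F L]
  [Algebra F E]

instance [IsNormalClosure F L E] [Algebra.IsAlgebraic F L] :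
    FaithfulSMul Gal(E/F) (L →ₐ[F] E) := by
  refine ⟨fun {g₁ g₂} h => ?_⟩
  have htop : normalClosure F L E = ⊤ :=
    (Algebra.IsAlgebraic.isNormalClosure_iff.mp ‹IsNormalClosure F L E›).2
  rw [← inv_mul_eq_one, ← Subgroup.mem_bot, ← fixingSubgroup_top, ← Subgroup.zpowers_le,
    ← le_iff_le, ← htop, normalClosure_le_iff]
  intro σ
  rw [le_iff_le, Subgroup.zpowers_le, IntermediateField.mem_fixingSubgroup_iff]
  rintro _ ⟨x, rfl⟩
  have hx : g₁ (σ x) = g₂ (σ x) := AlgHom.congr_fun (h σ) x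
  simp [← hx]

theorem natCard_fiber_restrict_of_splits [Algebra K L] [IsScalarTower F K L]
    [FiniteDimensional F L] [Algebra.IsSeparable F L]
    (hsplit : ∀ x : L, ((minpoly F x).map (algebraMap F E)).Splits) (τ : K →ₐ[F] E) :
    Nat.card {σ : L →ₐ[F] E // σ.comp (IsScalarTower.toAlgHom F K L) = τ} = finrank K L := by
  have : FiniteDimensional K L := .of_restrictScalars_finite F K L
  have : Algebra.IsSeparable K L := Algebra.isSeparable_tower_top_of_isSeparable F K L
  let : Algebra K E := τ.toAlgebra
  have : IsScalarTower F K E := .of_algebraMap_eq fun a => (τ.commutes a).symm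
  let extendScalars :
      {σ : L →ₐ[F] E // σ.comp (IsScalarTower.toAlgHom F K L) = τ} ≃ (L →ₐ[K] E) :=
    { toFun σ := { σ.1 with commutes' k := AlgHom.congr_fun σ.2 k }
      invFun σ := ⟨σ.restrictScalars F, AlgHom.ext σ.commutes⟩
      left_inv _ := rfl
      right_inv _ := rfl }
  rw [Nat.card_congr extendScalars]
  refine AlgHom.natCard_of_splits K L E fun x => ?_
  have hsplitK := hsplit x
  rw [IsScalarTower.algebraMap_eq F K E, ← Polynomial.map_map] at hsplitK
  exact hsplitK.of_dvd (Polynomial.map_ne_zero (Polynomial.map_ne_zero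
    (minpoly.ne_zero (Algebra.IsIntegral.isIntegral x))))
    (Polynomial.map_dvd _ (minpoly.dvd_map_of_isScalarTower F K x))

theorem exists_injective_hom_wreathProduct_of_finrank_eq_two [Algebra K L] [IsScalarTower F K L]
    [IsNormalClosure F L E] [FiniteDimensional F L] [Algebra.IsSeparable F L]
    (hKL : finrank K L = 2) :
    ∃ φ : Gal(E/F) →* WreathProduct C₂ (Fin (finrank F K)) (Equiv.Perm (Fin (finrank F K))),
      Function.Injective φ := by
  have : FiniteDimensional F K := .left F K L
  have hsplit : ∀ x : L, ((minpoly F x).map (algebraMap F E)).Splits := IsNormalClosure.splits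
  have hcard : Nat.card (K →ₐ[F] E) = finrank F K := by
    have : Algebra.IsSeparable F K := Algebra.isSeparable_tower_bot_of_isSeparable F K L
    refine AlgHom.natCard_of_splits F K E fun x => ?_
    rw [← minpoly.algebraMap_eq (algebraMap K L).injective]
    exact hsplit _
  exact exists_injective_hom_wreathProduct_of_card_fiber_eq_two
    (fun σ : L →ₐ[F] E => σ.comp (IsScalarTower.toAlgHom F K L)) (fun _ _ => rfl)
    ((Finite.equivFin _).trans (finCongr hcard))
    fun τ => (natCard_fiber_restrict_of_splits hsplit τ).trans hKL

end Galois

/-- **Chai–Oort.** Let `K` be a number field of degree `n = [K : ℚ]` and let `L`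
be a quadratic extension of `K` inside a fixed algebraic closure `Qbar` of `ℚ`.  Let `L^c`
denote the Galois closure of `L/ℚ`.  Then `Gal(L^c/ℚ)` is isomorphic to a subgroup of the
wreath product `C₂ ≀_Ω S_n`, where `Ω = {1, …, n}` and `S_n` acts by permuting components:
there is an injective group homomorphism
`Gal(L^c/ℚ) → (Fin n → ℤ/2ℤ) ⋊_θ S_n` with `(θ_π f)(i) = f(π⁻¹ i)`. -/
theorem chai_oort {Qbar : Type*} [Field Qbar] [Algebra ℚ Qbar] [IsAlgClosure ℚ Qbar]
    (K L : IntermediateField ℚ Qbar) (hKL : K ≤ L) (n : ℕ)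
    [FiniteDimensional ℚ ↥L]
    (hdegK : Module.finrank ℚ ↥K = n)
    (hquad : IntermediateField.relfinrank K L = 2) :
    ∃ φ : (↥(IntermediateField.normalClosure ℚ ↥L Qbar) ≃ₐ[ℚ] ↥(IntermediateField.normalClosure ℚ ↥L Qbar)) →*
        WreathProduct (Multiplicative (ZMod 2)) (Fin n) (Equiv.Perm (Fin n)),
      Function.Injective φ := by
  let : Algebra K L := (inclusion hKL).toAlgebra
  have : IsScalarTower ℚ K L := .of_algebraMap_eq' (Subsingleton.elim _ _)
  have hfinrank : finrank K L = 2 := relfinrank_eq_finrank_of_le hKL ▸ hquad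
  -- An intermediate field carries its own `ℚ`-module and `ℚ`-algebra structures; they agree only
  -- propositionally with those of `DivisionRing.toRatAlgebra`, which `normalClosure ℚ L Qbar`
  -- and the lemma above are elaborated with.
  have : @FiniteDimensional ℚ L _ _ Algebra.toModule := by
    rwa [Subsingleton.elim (Algebra.toModule : Module ℚ L) L.module']
  have hn : @finrank ℚ K _ _ Algebra.toModule = n := by
    rwa [Subsingleton.elim (Algebra.toModule : Module ℚ K) K.module']
  have : Nonempty (L →ₐ[ℚ] Qbar) := ⟨(L.val : L →+* Qbar).toRatAlgHom⟩
  have : IsNormalClosure ℚ L (normalClosure ℚ L Qbar) := by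
    rw [Subsingleton.elim (DivisionRing.toRatAlgebra : Algebra ℚ (normalClosure ℚ L Qbar))
      (normalClosure ℚ L Qbar).algebra']
    exact isNormalClosure_normalClosure ℚ L Qbar
  subst hn
  exact exists_injective_hom_wreathProduct_of_finrank_eq_two hfinrank
end

section
/- Let F be a field with a fixed algebraic closure F̄, and let K ⊆ L be intermediate fields of F̄/F with L/F finite and separable. Suppose K contains a primitive n-th root of unity and that L/K is a cyclic extension of degree n, i.e., L/K is Galois with cyclic Galois group of order n. Let K^c and L^c denote the Galois closures of K/F and L/F inside F̄, and let Ω := Hom_F(K, K^c) with Gal(K^c/F) acting on Ω by post-composition. Then there exists an injective group homomorphism from Gal(L^c/F) into the wreath product Gal(L/K) ≀_Ω Gal(K^c/F) = (Ω → Gal(L/K)) ⋊_θ Gal(K^c/F). -/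
/-- The algebra automorphism group of `B` acts on the left on `A →ₐ[R] B` by
post-composition. -/
instance algEquivMulActionAlgHom {R A B : Type*} [CommSemiring R] [Semiring A] [Semiring B]
    [Algebra R A] [Algebra R B] : MulAction (B ≃ₐ[R] B) (A →ₐ[R] B) where
  smul g ω := (g : B →ₐ[R] B).comp ω
  one_smul ω := by ext x; rfl
  mul_smul g h ω := by ext x; rfl

open Function IntermediateField
open scoped RightActions

namespace WreathProduct

variable {A Ω H G : Type*} [Group A] [Group H] [MulAction H Ω] [Group G]

def ofCocycle (π : G →* H) (c : G → Ω → A)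
    (hc : ∀ g h ω, c (g * h) ω = c g ω * c h ((π g)⁻¹ • ω)) : G →* WreathProduct A Ω H :=
  MonoidHom.mk' (fun g ↦ ⟨c g, π g⟩) fun g h ↦
    SemidirectProduct.ext (funext (hc g h)) (map_mul π g h)

theorem ofCocycle_injective {π : G →* H} {c : G → Ω → A}
    {hc : ∀ g h ω, c (g * h) ω = c g ω * c h ((π g)⁻¹ • ω)}
    (h : ∀ g, π g = 1 → (∀ ω, c g ω = 1) → g = 1) : Injective (ofCocycle π c hc) :=
  (injective_iff_map_eq_one _).2 fun g hg ↦
    h g (congrArg SemidirectProduct.right hg) (congrFun (congrArg SemidirectProduct.left hg))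

theorem exists_injective_of_fibration {X : Type*} [MulAction G X] [FaithfulSMul G X]
    [MulAction Aᵐᵒᵖ X] [SMulCommClass G Aᵐᵒᵖ X] (π : G →* H) (p : X → Ω)
    (hp_surj : Surjective p) (hp_smul : ∀ (g : G) x, p (g • x) = π g • p x)
    (hp_fiber : ∀ x y, p x = p y → ∃ a : A, y = x <• a)
    (h_free : ∀ x : X, Injective (x <• · : A → X)) :
    ∃ φ : G →* WreathProduct A Ω H, Injective φ := by
  obtain ⟨s, hs⟩ : ∃ s : Ω → X, ∀ ω, p (s ω) = ω := ⟨_, rightInverse_surjInv hp_surj⟩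
  have hexists : ∀ g ω, ∃ a : A, g • s ((π g)⁻¹ • ω) = s ω <• a := fun g ω ↦
    hp_fiber _ _ (by rw [hp_smul, hs, hs, smul_inv_smul])
  choose c hc using hexists
  have hcocycle : ∀ g h ω, c (g * h) ω = c g ω * c h ((π g)⁻¹ • ω) := by
    intro g h ω
    apply h_free (s ω)
    calc s ω <• c (g * h) ω = g • h • s ((π h)⁻¹ • (π g)⁻¹ • ω) := by
          rw [← hc, map_mul, mul_inv_rev, mul_smul, mul_smul]
      _ = s ω <• c g ω <• c h ((π g)⁻¹ • ω) := by rw [hc, smul_comm, hc]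
      _ = s ω <• (c g ω * c h ((π g)⁻¹ • ω)) := op_smul_op_smul _ _ _
  refine ⟨ofCocycle π c hcocycle, ofCocycle_injective fun g hπ hc1 ↦ ?_⟩
  refine FaithfulSMul.eq_of_smul_eq_smul (α := X) fun x ↦ ?_
  obtain ⟨a, ha⟩ := hp_fiber (s (p x)) x (hs _)
  have := hc g (p x)
  rw [hπ, inv_one, one_smul, hc1, MulOpposite.op_one, one_smul] at this
  rw [one_smul, ha, smul_comm, this]

end WreathProduct

namespace AlgHom

variable {R S A B : Type*} [CommSemiring R] [CommSemiring S] [Semiring A] [Semiring B]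
  [Algebra R S] [Algebra S A] [Algebra R A] [IsScalarTower R S A] [Algebra R B]

instance : MulAction (A ≃ₐ[S] A)ᵐᵒᵖ (A →ₐ[R] B) where
  smul a μ := μ.comp ((a.unop : A →ₐ[S] A).restrictScalars R)
  one_smul _ := rfl
  mul_smul _ _ _ := rfl

instance : SMulCommClass (B ≃ₐ[R] B) (A ≃ₐ[S] A)ᵐᵒᵖ (A →ₐ[R] B) where
  smul_comm _ _ _ := rfl

end AlgHom

section Embeddings

variable {F K L M : Type*} [Field F] [Field K] [Field L] [Field M] [Algebra F K] [Algebra F L]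
  [Algebra K L] [IsScalarTower F K L] [Algebra F M]

theorem AlgHom.op_smul_injective (μ : L →ₐ[F] M) : Injective (μ <• · : (L ≃ₐ[K] L) → _) :=
  fun _ _ h ↦ AlgEquiv.ext fun x ↦ μ.injective (DFunLike.congr_fun h x)

theorem AlgHom.exists_eq_op_smul_of_apply_algebraMap_eq [Normal K L] {μ ν : L →ₐ[F] M}
    (h : ∀ x : K, μ (algebraMap K L x) = ν (algebraMap K L x)) : ∃ a : L ≃ₐ[K] L, ν = μ <• a := by
  let _ : Algebra L M := μ.toAlgebra
  let _ : Algebra K M := (μ.domRestrict K).toAlgebra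
  have : IsScalarTower K L M := IsScalarTower.of_algebraMap_eq' rfl
  let νK : L →ₐ[K] M := { ν with commutes' := fun x ↦ (h x).symm }
  refine ⟨Normal.algHomEquivAut K M L νK, AlgHom.ext fun x ↦ ?_⟩
  exact (DFunLike.congr_fun ((Normal.algHomEquivAut K M L).symm_apply_apply νK) x).symm

end Embeddings

namespace IntermediateField

variable {F K L Fbar : Type*} [Field F] [Field K] [Field L] [Field Fbar] [Algebra F K]
  [Algebra F L] [Algebra K L] [IsScalarTower F K L] [Algebra F Fbar]
  {E M : IntermediateField F Fbar}

noncomputable def restrictNormalHomOfLE [Normal F E] (h : E ≤ M) : Gal(M/F) →* Gal(E/F) :=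
  let _ := (inclusion h).toAlgebra
  have : IsScalarTower F E M := .of_algebraMap_eq' rfl
  AlgEquiv.restrictNormalHom E

theorem coe_restrictNormalHomOfLE_apply [Normal F E] (h : E ≤ M) (g : Gal(M/F)) (x : E) :
    (restrictNormalHomOfLE h g x : Fbar) = g (inclusion h x) :=
  let _ := (inclusion h).toAlgebra
  have : IsScalarTower F E M := .of_algebraMap_eq' rfl
  congrArg Subtype.val (AlgEquiv.restrictNormal_commutes g E x)

noncomputable def restrictEmbedding (hE : normalClosure F K Fbar ≤ E) (μ : L →ₐ[F] M) :
    K →ₐ[F] E :=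
  ((M.val.comp μ).domRestrict K).codRestrict E.toSubalgebra fun x ↦
    hE (AlgHom.fieldRange_le_normalClosure _ ⟨x, rfl⟩)

theorem coe_restrictEmbedding_apply (hE : normalClosure F K Fbar ≤ E) (μ : L →ₐ[F] M) (x : K) :
    (restrictEmbedding hE μ x : Fbar) = μ (algebraMap K L x) :=
  rfl

theorem restrictEmbedding_surjective [IsAlgClosed Fbar] [Algebra.IsAlgebraic K L]
    (hE : normalClosure F K Fbar ≤ E) (hM : normalClosure F L Fbar ≤ M) :
    Surjective (restrictEmbedding hE : (L →ₐ[F] M) → _) := by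
  intro ω
  obtain ⟨φ, hφ⟩ := IsAlgClosed.surjective_domRestrict_of_isAlgebraic (L := K) (E := L)
    (E.val.comp ω)
  refine ⟨φ.codRestrict M.toSubalgebra fun y ↦ hM (φ.fieldRange_le_normalClosure ⟨y, rfl⟩),
    AlgHom.ext fun x ↦ Subtype.ext ?_⟩
  exact DFunLike.congr_fun hφ x

theorem restrictEmbedding_smul [Normal F E] (hE : normalClosure F K Fbar ≤ E) (h : E ≤ M)
    (g : Gal(M/F)) (μ : L →ₐ[F] M) :
    restrictEmbedding hE (g • μ) = restrictNormalHomOfLE h g • restrictEmbedding hE μ := by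
  ext x
  have hx : inclusion h (restrictEmbedding hE μ x) = μ (algebraMap K L x) :=
    Subtype.ext (coe_restrictEmbedding_apply hE μ x)
  calc (restrictEmbedding hE (g • μ) x : Fbar) = g (μ (algebraMap K L x)) := rfl
    _ = _ := by rw [← hx, ← coe_restrictNormalHomOfLE_apply]; rfl

theorem exists_eq_op_smul_of_restrictEmbedding_eq [Normal K L] (hE : normalClosure F K Fbar ≤ E)
    {μ ν : L →ₐ[F] M} (h : restrictEmbedding hE μ = restrictEmbedding hE ν) :
    ∃ a : L ≃ₐ[K] L, ν = μ <• a :=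
  μ.exists_eq_op_smul_of_apply_algebraMap_eq fun x ↦ Subtype.ext <| by
    simpa only [coe_restrictEmbedding_apply] using congrArg (fun ω ↦ (ω x : Fbar)) h

end IntermediateField

namespace normalClosure

variable {F L Fbar : Type*} [Field F] [Field L] [Field Fbar] [Algebra F L] [Algebra F Fbar]

theorem eq_one_of_forall_smul_eq_self [IsAlgClosed Fbar] [Algebra.IsAlgebraic F L]
    {g : Gal(normalClosure F L Fbar/F)} (hg : ∀ μ : L →ₐ[F] normalClosure F L Fbar, g • μ = μ) :
    g = 1 := by
  have htop : normalClosure F L (normalClosure F L Fbar) = ⊤ :=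
    (Algebra.IsAlgebraic.isNormalClosure_iff.1
      (Algebra.IsAlgebraic.isNormalClosure_normalClosure fun _ ↦ IsAlgClosed.splits _)).2
  have hfix : ⊤ ≤ fixedField (Subgroup.zpowers g) :=
    htop ▸ normalClosure_le_iff.2 fun μ ↦ (le_iff_le _ _).2 <| Subgroup.zpowers_le.2 <|
      (mem_fixingSubgroup_iff _ _).2 fun _ ⟨x, hx⟩ ↦ hx ▸ DFunLike.congr_fun (hg μ) x
  rwa [le_iff_le, Subgroup.zpowers_le, fixingSubgroup_top, Subgroup.mem_bot] at hfix

instance [IsAlgClosed Fbar] [Algebra.IsAlgebraic F L] :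
    FaithfulSMul Gal(normalClosure F L Fbar/F) (L →ₐ[F] normalClosure F L Fbar) :=
  ⟨fun h ↦ inv_mul_eq_one.1 <| eq_one_of_forall_smul_eq_self fun μ ↦ by
    rw [mul_smul, ← h, inv_smul_smul]⟩

end normalClosure

theorem cyclic_embedding_general
    {F Fbar : Type*} [Field F] [Field Fbar] [Algebra F Fbar] [IsAlgClosure F Fbar]
    (K L : IntermediateField F Fbar) (hKL : K ≤ L)
    [FiniteDimensional F ↥L]
    [Algebra ↥K ↥L] [IsScalarTower ↥K ↥L Fbar]
    [IsGalois ↥K ↥L] :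
    ∃ φ : (↥(IntermediateField.normalClosure F ↥L Fbar) ≃ₐ[F] ↥(IntermediateField.normalClosure F ↥L Fbar)) →*
        WreathProduct (↥L ≃ₐ[↥K] ↥L) (↥K →ₐ[F] ↥(IntermediateField.normalClosure F ↥K Fbar))
          (↥(IntermediateField.normalClosure F ↥K Fbar) ≃ₐ[F] ↥(IntermediateField.normalClosure F ↥K Fbar)),
      Function.Injective φ := by
  have : IsScalarTower F K L := .to₁₂₃ F K L Fbar
  have : IsAlgClosed Fbar := IsAlgClosure.isAlgClosed F
  have hKLc := normalClosure_mono K L hKL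
  exact WreathProduct.exists_injective_of_fibration (restrictNormalHomOfLE hKLc)
    (restrictEmbedding le_rfl) (restrictEmbedding_surjective le_rfl le_rfl)
    (restrictEmbedding_smul le_rfl hKLc)
    (fun _ _ ↦ exists_eq_op_smul_of_restrictEmbedding_eq le_rfl) AlgHom.op_smul_injective

set_option synthInstance.maxHeartbeats 1000000 in
/-- Let `F ⊆ K ⊆ L` be a tower inside an algebraic closure `Fbar` of `F`
with `L/F` finite and separable.  Suppose `K` contains a primitive `n`-th root of unity and
`L/K` is a cyclic extension of degree `n` (Galois with cyclic Galois group of order `n`).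
Let `K^c, L^c` be the Galois closures of `K/F`, `L/F` inside `Fbar` and let
`Ω := Hom_F(K, K^c)` with `Gal(K^c/F)` acting by post-composition.  Then there is an injective
group homomorphism `Gal(L^c/F) → Gal(L/K) ≀_Ω Gal(K^c/F)`. -/
theorem cyclic_embedding
    {F Fbar : Type*} [Field F] [Field Fbar] [Algebra F Fbar] [IsAlgClosure F Fbar]
    (K L : IntermediateField F Fbar) (hKL : K ≤ L)
    [FiniteDimensional F ↥L] [Algebra.IsSeparable F ↥L]
    [Algebra ↥K ↥L] [IsScalarTower ↥K ↥L Fbar]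
    (n : ℕ) (ω : ↥K) (hω : IsPrimitiveRoot ω n)
    [IsGalois ↥K ↥L]
    (hcyc : IsCyclic (↥L ≃ₐ[↥K] ↥L))
    (hdeg : Module.finrank ↥K ↥L = n) :
    ∃ φ : (↥(IntermediateField.normalClosure F ↥L Fbar) ≃ₐ[F] ↥(IntermediateField.normalClosure F ↥L Fbar)) →*
        WreathProduct (↥L ≃ₐ[↥K] ↥L) (↥K →ₐ[F] ↥(IntermediateField.normalClosure F ↥K Fbar))
          (↥(IntermediateField.normalClosure F ↥K Fbar) ≃ₐ[F] ↥(IntermediateField.normalClosure F ↥K Fbar)),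
      Function.Injective φ :=
  cyclic_embedding_general K L hKL
end

section
/- Let F be a field of characteristic ≠ 2 with a fixed algebraic closure F̄, and let K ⊆ L be intermediate fields of F̄/F with L/F finite and separable and with [L : K] = 2. Let K^c and L^c denote the Galois closures of K/F and L/F inside F̄, and let Ω := Hom_F(K, K^c) with Gal(K^c/F) acting on Ω by post-composition. Then there exists an injective group homomorphism from Gal(L^c/F) into the wreath product Gal(L/K) ≀_Ω Gal(K^c/F) = (Ω → Gal(L/K)) ⋊_θ Gal(K^c/F); here Gal(L/K) has order 2. -/
open IntermediateField

namespace WreathProduct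

variable {G A Ω H : Type*} [Group G] [Group A] [Group H] [MulAction H Ω]
  (r : G →* H) (c : G → Ω → A) (hc : ∀ g₁ g₂ ω, c (g₁ * g₂) ω = c g₁ ω * c g₂ ((r g₁)⁻¹ • ω))

def lift : G →* WreathProduct A Ω H :=
  MonoidHom.mk' (fun g ↦ ⟨c g, r g⟩) fun g₁ g₂ ↦
    SemidirectProduct.ext (funext (hc g₁ g₂)) (map_mul r g₁ g₂)

theorem lift_injective (h : ∀ g, r g = 1 → c g = 1 → g = 1) : Function.Injective (lift r c hc) :=
  (injective_iff_map_eq_one _).2 fun g hg ↦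
    h g (congrArg SemidirectProduct.right hg) (congrArg SemidirectProduct.left hg)

end WreathProduct

theorem IntermediateField.isScalarTower_base_of_isScalarTower {F E : Type*} [Field F] [Field E]
    [Algebra F E] (A B : IntermediateField F E) [Algebra A B] [IsScalarTower A B E] :
    IsScalarTower F A B :=
  IsScalarTower.of_algebraMap_eq fun x ↦ (algebraMap B E).injective <| by
    rw [← IsScalarTower.algebraMap_apply, ← IsScalarTower.algebraMap_apply,
      ← IsScalarTower.algebraMap_apply]

section Embeddings

variable {F K L M : Type*} [Field F] [Field K] [Field L] [Field M]

theorem Normal.exists_algEquiv_apply_eq [Algebra K L] [Normal K L] (ψ₁ ψ₂ : L →+* M)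
    (h : ∀ x : K, ψ₁ (algebraMap K L x) = ψ₂ (algebraMap K L x)) :
    ∃ σ : Gal(L/K), ∀ x, ψ₂ x = ψ₁ (σ x) := by
  let _ : Algebra L M := ψ₁.toAlgebra
  let _ : Algebra K M := (ψ₁.comp (algebraMap K L)).toAlgebra
  have : IsScalarTower K L M := IsScalarTower.of_algebraMap_eq fun _ ↦ rfl
  let ψ₂' : L →ₐ[K] M := { ψ₂ with commutes' := fun r ↦ (h r).symm }
  exact ⟨ψ₂'.restrictNormal' L, fun x ↦ (ψ₂'.restrictNormal_commutes L x).symm⟩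

variable [Algebra F K] [Algebra F L] [Algebra F M]

theorem AlgHom.exists_extend_of_splits [Algebra K L] [IsScalarTower F K L]
    [Algebra.IsAlgebraic F L] (f : K →ₐ[F] M)
    (hM : ∀ x : L, ((minpoly F x).map (algebraMap F M)).Splits) :
    ∃ φ : L →ₐ[F] M, ∀ x : K, φ (algebraMap K L x) = f x := by
  obtain ⟨φ, hφ⟩ := IntermediateField.exists_algHom_of_splits' f fun s : L ↦
    have hs := Algebra.IsIntegral.isIntegral (R := F) s
    ⟨hs.tower_top, hs.minpoly_splits_tower_top' <| by
      rw [AlgHom.toRingHom_eq_coe, AlgHom.comp_algebraMap]; exact hM s⟩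
  exact ⟨φ, fun x ↦ DFunLike.congr_fun hφ x⟩

theorem AlgHom.exists_algebraMap_comp_eq_of_splits [Algebra L M] [IsScalarTower F L M]
    [Algebra.IsAlgebraic F K] (hL : ∀ x : K, ((minpoly F x).map (algebraMap F L)).Splits)
    (ψ : K →ₐ[F] M) : ∃ ω : K →ₐ[F] L, ∀ x, algebraMap L M (ω x) = ψ x := by
  let ι := IsScalarTower.toAlgHom F L M
  have hrange (x : K) : ψ x ∈ ι.range := by
    refine (hL x).mem_range_of_isRoot
      (Polynomial.map_ne_zero (minpoly.ne_zero (Algebra.IsIntegral.isIntegral x))) ?_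
    rw [Polynomial.map_map, AlgHom.toRingHom_eq_coe, AlgHom.comp_algebraMap, Polynomial.IsRoot,
      Polynomial.eval_map_algebraMap, Polynomial.aeval_algHom_apply, minpoly.aeval, map_zero]
  refine ⟨(AlgEquiv.ofInjective ι ι.injective).symm.toAlgHom.comp (ψ.codRestrict _ hrange),
    fun x ↦ congrArg Subtype.val ((AlgEquiv.ofInjective ι ι.injective).apply_symm_apply _)⟩

theorem IsNormalClosure.eq_one_of_forall_algHom_apply_eq [Algebra.IsAlgebraic F L]
    [IsNormalClosure F L M] (g : Gal(M/F)) (hg : ∀ (ψ : L →ₐ[F] M) x, g (ψ x) = ψ x) :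
    g = 1 := by
  have hg' : g ∈ fixingSubgroup (normalClosure F L M) := by
    rw [← Subgroup.zpowers_le, ← le_iff_le, normalClosure_le_iff]
    intro ψ
    rw [le_iff_le, Subgroup.zpowers_le, IntermediateField.mem_fixingSubgroup_iff]
    rintro _ ⟨x, rfl⟩
    exact hg ψ x
  rwa [(Algebra.IsAlgebraic.isNormalClosure_iff.1 ‹_›).2, fixingSubgroup_top,
    Subgroup.mem_bot] at hg'

end Embeddings

section GaloisCocycle

variable {F K L N E : Type*} [Field F] [Field K] [Field L] [Field N] [Field E]
  [Algebra F K] [Algebra F L] [Algebra K L] [IsScalarTower F K L] [Algebra.IsAlgebraic F L]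
  [Algebra F N] [Algebra F E] [IsNormalClosure F L E] [Algebra N E] [IsScalarTower F N E]

variable (L E) in
noncomputable def extendEmbedding (ω : K →ₐ[F] N) : L →ₐ[F] E :=
  (AlgHom.exists_extend_of_splits ((IsScalarTower.toAlgHom F N E).comp ω)
    IsNormalClosure.splits).choose

theorem extendEmbedding_algebraMap (ω : K →ₐ[F] N) (x : K) :
    extendEmbedding L E ω (algebraMap K L x) = algebraMap N E (ω x) :=
  (AlgHom.exists_extend_of_splits ((IsScalarTower.toAlgHom F N E).comp ω)
    IsNormalClosure.splits).choose_spec x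

variable [Normal K L] [Normal F N]

theorem exists_galCocycle (g : Gal(E/F)) (ω : K →ₐ[F] N) :
    ∃ σ : Gal(L/K), ∀ x, g (extendEmbedding L E ((AlgEquiv.restrictNormalHom N g)⁻¹ • ω) x) =
      extendEmbedding L E ω (σ x) := by
  refine Normal.exists_algEquiv_apply_eq (extendEmbedding L E ω : L →+* E)
    ((g : E →+* E).comp (extendEmbedding L E _)) fun x ↦ ?_
  simp only [RingHom.coe_comp, RingHom.coe_coe, Function.comp_apply, extendEmbedding_algebraMap]
  calc algebraMap N E (ω x)
      = algebraMap N E ((AlgEquiv.restrictNormalHom N g •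
          (AlgEquiv.restrictNormalHom N g)⁻¹ • ω) x) := by rw [smul_inv_smul]
    _ = g (algebraMap N E (((AlgEquiv.restrictNormalHom N g)⁻¹ • ω) x)) :=
      AlgEquiv.restrictNormal_commutes g N _

variable (L) in
noncomputable def galCocycle (g : Gal(E/F)) (ω : K →ₐ[F] N) : Gal(L/K) :=
  (exists_galCocycle g ω).choose

theorem apply_extendEmbedding (g : Gal(E/F)) (ω : K →ₐ[F] N) (x : L) :
    g (extendEmbedding L E ((AlgEquiv.restrictNormalHom N g)⁻¹ • ω) x) =
      extendEmbedding L E ω (galCocycle L g ω x) :=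
  (exists_galCocycle g ω).choose_spec x

theorem galCocycle_mul (g₁ g₂ : Gal(E/F)) (ω : K →ₐ[F] N) :
    galCocycle L (g₁ * g₂) ω =
      galCocycle L g₁ ω * galCocycle L g₂ ((AlgEquiv.restrictNormalHom N g₁)⁻¹ • ω) := by
  refine AlgEquiv.ext fun x ↦ (extendEmbedding L E ω).injective ?_
  change extendEmbedding L E ω _ = extendEmbedding L E ω _
  rw [← apply_extendEmbedding, map_mul, mul_inv_rev, mul_smul, AlgEquiv.mul_apply,
    apply_extendEmbedding, apply_extendEmbedding, AlgEquiv.mul_apply]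

theorem exists_injective_monoidHom_wreathProduct
    (hN : ∀ x : K, ((minpoly F x).map (algebraMap F N)).Splits) :
    ∃ φ : Gal(E/F) →* WreathProduct Gal(L/K) (K →ₐ[F] N) Gal(N/F), Function.Injective φ := by
  refine ⟨WreathProduct.lift _ (galCocycle L) galCocycle_mul,
    WreathProduct.lift_injective _ _ _ fun g hres hcoc ↦ ?_⟩
  refine IsNormalClosure.eq_one_of_forall_algHom_apply_eq (L := L) g fun ψ x ↦ ?_
  have : Algebra.IsAlgebraic F K := Algebra.IsAlgebraic.tower_bot F K L
  obtain ⟨ω, hω⟩ := AlgHom.exists_algebraMap_comp_eq_of_splits hN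
    (ψ.comp (IsScalarTower.toAlgHom F K L))
  obtain ⟨σ, hσ⟩ := Normal.exists_algEquiv_apply_eq (extendEmbedding L E ω : L →+* E) ψ
    fun a ↦ (extendEmbedding_algebraMap ω a).trans (hω a)
  have hfix (y : L) : g (extendEmbedding L E ω y) = extendEmbedding L E ω y := by
    simpa [hres, hcoc] using apply_extendEmbedding g ω y
  simp only [RingHom.coe_coe] at hσ
  rw [hσ, hfix]

end GaloisCocycle

theorem quadratic_embedding_general
    {F Fbar : Type*} [Field F] [Field Fbar] [Algebra F Fbar] [IsAlgClosure F Fbar]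
    (K L : IntermediateField F Fbar) (hKL : K ≤ L)
    [Algebra.IsSeparable F ↥L]
    [Algebra ↥K ↥L] [IsScalarTower ↥K ↥L Fbar]
    (hquad : Module.finrank ↥K ↥L = 2) :
    Nat.card (↥L ≃ₐ[↥K] ↥L) = 2 ∧
    ∃ φ : (↥(IntermediateField.normalClosure F ↥L Fbar) ≃ₐ[F] ↥(IntermediateField.normalClosure F ↥L Fbar)) →*
        WreathProduct (↥L ≃ₐ[↥K] ↥L) (↥K →ₐ[F] ↥(IntermediateField.normalClosure F ↥K Fbar))
          (↥(IntermediateField.normalClosure F ↥K Fbar) ≃ₐ[F] ↥(IntermediateField.normalClosure F ↥K Fbar)),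
      Function.Injective φ := by
  have := K.isScalarTower_base_of_isScalarTower L
  -- supplies `Normal K L`, and `IsGalois K L` once `K ⊆ L` is known to be separable
  have : Algebra.IsQuadraticExtension K L := ⟨hquad⟩
  have : Algebra.IsSeparable K L := Algebra.isSeparable_tower_top_of_isSeparable F K L
  have := IsAlgClosure.normal F Fbar
  have : Nonempty (K →ₐ[F] Fbar) := ⟨K.val⟩
  have : Nonempty (L →ₐ[F] Fbar) := ⟨L.val⟩
  let _ : Algebra (normalClosure F K Fbar) (normalClosure F L Fbar) :=
    (inclusion (normalClosure_mono K L hKL)).toAlgebra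
  have : IsScalarTower F (normalClosure F K Fbar) (normalClosure F L Fbar) :=
    IsScalarTower.of_algebraMap_eq fun _ ↦ rfl
  exact ⟨by rw [IsGalois.card_aut_eq_finrank, hquad],
    exists_injective_monoidHom_wreathProduct IsNormalClosure.splits⟩

set_option synthInstance.maxHeartbeats 1000000 in
/-- Let `F` be a field of characteristic `≠ 2` with algebraic closure
`Fbar`, and let `F ⊆ K ⊆ L` be a tower inside `Fbar` with `L/F` finite and separable and
`[L : K] = 2`.  Let `K^c, L^c` be the Galois closures of `K/F`, `L/F` inside `Fbar` and let
`Ω := Hom_F(K, K^c)` with `Gal(K^c/F)` acting by post-composition.  Then `Gal(L/K)` has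
order `2` and there is an injective group homomorphism
`Gal(L^c/F) → Gal(L/K) ≀_Ω Gal(K^c/F)`. -/
theorem quadratic_embedding
    {F Fbar : Type*} [Field F] [Field Fbar] [Algebra F Fbar] [IsAlgClosure F Fbar]
    (hchar : ringChar F ≠ 2)
    (K L : IntermediateField F Fbar) (hKL : K ≤ L)
    [FiniteDimensional F ↥L] [Algebra.IsSeparable F ↥L]
    [Algebra ↥K ↥L] [IsScalarTower ↥K ↥L Fbar]
    (hquad : Module.finrank ↥K ↥L = 2) :
    Nat.card (↥L ≃ₐ[↥K] ↥L) = 2 ∧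
    ∃ φ : (↥(IntermediateField.normalClosure F ↥L Fbar) ≃ₐ[F] ↥(IntermediateField.normalClosure F ↥L Fbar)) →*
        WreathProduct (↥L ≃ₐ[↥K] ↥L) (↥K →ₐ[F] ↥(IntermediateField.normalClosure F ↥K Fbar))
          (↥(IntermediateField.normalClosure F ↥K Fbar) ≃ₐ[F] ↥(IntermediateField.normalClosure F ↥K Fbar)),
      Function.Injective φ :=
  quadratic_embedding_general K L hKL hquad
end
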